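/- arXiv:1903.01413 — 4 statements merged into one kernel-verified Lean document; each statement's English description precedes it below -/
import Mathlib

section
/- In an associative ℚ(q)-algebra, let E, F, K, K^{-1}, F' be elements with KK^{-1}=1=K^{-1}K, [E,F] = (K−K^{-1})/(q−q^{-1}), [E,F']=0, F'K = q^{-1}KF', and F'K^{-1} = qK^{-1}F'. Set F_β := −q^{1/2}FF' + q^{-1/2}F'F. Then [E, F_β] = −q^{-1/2}·K·F'. -/
/-!
Since `E` commutes with `F'`, the commutator with `E` passes through the factor `F'` in both
terms of `F_β`, giving `[E, F_β] = -q^{1/2} [E, F] F' + q^{-1/2} F' [E, F]`. Substituting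
`[E, F] = (K - K⁻¹)/(q - q⁻¹)` and moving `F'` to the right of `K^{±1}` makes the `K⁻¹ F'` terms
cancel, while the `K F'` terms carry the coefficient `q^{-1/2} (q⁻¹ - q)/(q - q⁻¹) = -q^{-1/2}`.
-/

section

attribute [local instance] LieRing.ofAssociativeRing

open LieRing

theorem Ring.lie_mul {R : Type*} [Ring R] (a b c : R) :
    ⁅a, b * c⁆ = ⁅a, b⁆ * c + b * ⁅a, c⁆ := by
  simp only [of_associative_ring_bracket]
  noncomm_ring

theorem Commute.lie_mul_right {R : Type*} [Ring R] {a c : R} (h : Commute a c) (b : R) :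
    ⁅a, b * c⁆ = ⁅a, b⁆ * c := by
  rw [Ring.lie_mul, of_associative_ring_bracket a c, h.eq, sub_self, mul_zero, add_zero]

theorem Commute.lie_mul_left {R : Type*} [Ring R] {a b : R} (h : Commute a b) (c : R) :
    ⁅a, b * c⁆ = b * ⁅a, c⁆ := by
  rw [Ring.lie_mul, of_associative_ring_bracket a b, h.eq, sub_self, zero_mul, zero_add]

end

/-- Here `v` plays the role of `q^{1/2}` (so `q = v ^ 2`) and `K'` that of `K⁻¹`. -/
theorem stmt12_general {F A : Type*} [Field F] [Ring A] [Algebra F A]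
    (v : F) (hv : v ≠ 0) (hq : v ^ 2 - (v ^ 2)⁻¹ ≠ 0)
    (E Fa K K' F' Fβ : A)
    (hEF : E * Fa - Fa * E = (v ^ 2 - (v ^ 2)⁻¹)⁻¹ • (K - K'))
    (hEF' : E * F' = F' * E)
    (hF'K : F' * K = (v ^ 2)⁻¹ • (K * F'))
    (hF'K' : F' * K' = (v ^ 2) • (K' * F'))
    (hFβ : Fβ = -(v • (Fa * F')) + v⁻¹ • (F' * Fa)) :
    E * Fβ - Fβ * E = -(v⁻¹ • (K * F')) := by
  let := LieRing.ofAssociativeRing (A := A)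
  have hE : Commute E F' := hEF'
  set c := (v ^ 2 - (v ^ 2)⁻¹)⁻¹ with hc
  have hKF' : c * (v⁻¹ * (v ^ 2)⁻¹ - v) = -v⁻¹ := by
    rw [show v⁻¹ * (v ^ 2)⁻¹ - v = -v⁻¹ * (v ^ 2 - (v ^ 2)⁻¹) by field_simp; ring,
      mul_left_comm, hc, inv_mul_cancel₀ hq, mul_one]
  have hK'F' : v - v⁻¹ * v ^ 2 = 0 := by field_simp; ring
  rw [← LieRing.of_associative_ring_bracket] at hEF ⊢
  calc ⁅E, Fβ⁆ = -(v • (⁅E, Fa⁆ * F')) + v⁻¹ • (F' * ⁅E, Fa⁆) := by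
        rw [hFβ, lie_add, lie_neg, lie_smul v, lie_smul v⁻¹, hE.lie_mul_right, hE.lie_mul_left]
    _ = (c * (v⁻¹ * (v ^ 2)⁻¹ - v)) • (K * F') + (c * (v - v⁻¹ * v ^ 2)) • (K' * F') := by
        rw [hEF, smul_mul_assoc, mul_smul_comm, sub_mul, mul_sub, hF'K, hF'K']
        module
    _ = -(v⁻¹ • (K * F')) := by
        rw [hKF', hK'F', mul_zero, zero_smul, add_zero, neg_smul]

/-- Quantum double relation, case α ⊏ β, in abstract form. Here v plays the role of
q^{1/2} (so q = v^2), K' plays the role of K⁻¹, and F' = F_γ for the adjacent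
interval γ with β = α ⊕ γ. -/
theorem stmt12 {F A : Type*} [Field F] [Ring A] [Algebra F A]
    (v : F) (hv : v ≠ 0) (hq : v ^ 2 - (v ^ 2)⁻¹ ≠ 0)
    (E Fa K K' F' Fβ : A)
    (hK : K * K' = 1) (hK' : K' * K = 1)
    (hEF : E * Fa - Fa * E = (v ^ 2 - (v ^ 2)⁻¹)⁻¹ • (K - K'))
    (hEF' : E * F' = F' * E)
    (hF'K : F' * K = (v ^ 2)⁻¹ • (K * F'))
    (hF'K' : F' * K' = (v ^ 2) • (K' * F'))
    (hFβ : Fβ = -(v • (Fa * F')) + v⁻¹ • (F' * Fa)) :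
    E * Fβ - Fβ * E = -(v⁻¹ • (K * F')) :=
  stmt12_general v hv hq E Fa K K' F' Fβ hEF hEF' hF'K hF'K' hFβ
end

section
/- In an associative ℚ(q)-algebra, let E, F, K, K^{-1}, F' be elements with KK^{-1}=1=K^{-1}K, [E,F]=(K−K^{-1})/(q−q^{-1}), [E,F']=0, F'K=q^{-1}KF', F'K^{-1}=qK^{-1}F'. Set F_β := −q^{1/2}F'F + q^{-1/2}FF'. Then [E,F_β] = q^{1/2}·K^{-1}·F'. -/
/-- Quantum double relation, case α ⊐ β, in abstract form. Here v plays the role of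
q^{1/2} (so q = v^2), K' plays the role of K⁻¹, and F' = F_γ with β = γ ⊕ α. -/
theorem stmt13 {F A : Type*} [Field F] [Ring A] [Algebra F A]
    (v : F) (hv : v ≠ 0) (hq : v ^ 2 - (v ^ 2)⁻¹ ≠ 0)
    (E Fa K K' F' Fβ : A)
    (hK : K * K' = 1) (hK' : K' * K = 1)
    (hEF : E * Fa - Fa * E = (v ^ 2 - (v ^ 2)⁻¹)⁻¹ • (K - K'))
    (hEF' : E * F' = F' * E)
    (hF'K : F' * K = (v ^ 2)⁻¹ • (K * F'))
    (hF'K' : F' * K' = (v ^ 2) • (K' * F'))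
    (hFβ : Fβ = -(v • (F' * Fa)) + v⁻¹ • (Fa * F')) :
    E * Fβ - Fβ * E = v • (K' * F') := by
  set c : F := (v ^ 2 - (v ^ 2)⁻¹)⁻¹ with hc
  have h1 : E * (F' * Fa) - (F' * Fa) * E = c • (F' * (K - K')) := by
    rw [← mul_assoc, hEF', mul_assoc, mul_assoc, ← mul_sub, hEF, mul_smul_comm]
  have h2 : E * (Fa * F') - (Fa * F') * E = c • ((K - K') * F') := by
    rw [← mul_assoc, mul_assoc Fa F' E, ← hEF', ← mul_assoc, ← sub_mul, hEF, smul_mul_assoc]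
  have expand : E * Fβ - Fβ * E
      = -(v • (E * (F' * Fa) - (F' * Fa) * E)) + v⁻¹ • (E * (Fa * F') - (Fa * F') * E) := by
    rw [hFβ]
    simp only [mul_add, add_mul, mul_neg, neg_mul, mul_smul_comm, smul_mul_assoc, smul_sub]
    abel
  have hKd : F' * (K - K') = (v ^ 2)⁻¹ • (K * F') - (v ^ 2) • (K' * F') := by
    rw [mul_sub, hF'K, hF'K']
  have hKd2 : (K - K') * F' = K * F' - K' * F' := by rw [sub_mul]
  have hq' : v ^ 2 - v⁻¹ ^ 2 ≠ 0 := by rw [inv_pow]; exact hq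
  have hd : v ^ 2 - v⁻¹ ^ 2 = (v ^ 4 - 1) / v ^ 2 := by field_simp
  have h4 : v ^ 4 - 1 ≠ 0 := by
    intro h
    apply hq'
    rw [hd, h, zero_div]
  rw [expand, h1, h2, hKd, hKd2]
  match_scalars
  · field_simp
    ring
  · field_simp
    simp only [hc, ← inv_pow]
    rw [hd, div_eq_mul_inv, mul_inv, inv_inv]
    field_simp
    ring
end

section
/- Let g be a Lie algebra over a field k of characteristic 0 possessing a triangular decomposition g = n₊ ⊕ h ⊕ n₋ graded by an abelian group Q with g_0 = h and suppose ⟨·,·⟩ is an invariant symmetric bilinear form on g that is non-degenerate on h, where invariant means ⟨[x,y],z⟩ = ⟨x,[y,z]⟩. Then any graded two-sided ideal i = ⊕_α i_α of g with i ∩ h = 0 and such that every nonzero weight α appearing in i satisfies α(Z)≠0 for some Z∈h (via the adjoint h-action) is contained in the kernel of ⟨·,·⟩. -/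
/-!
If `x ∈ i` has weight `α ≠ 0`, pick `z ∈ h` with `α(z) ≠ 0`; invariance gives
`α(z) ⟨x, y⟩ = ⟨[z, x], y⟩ = ⟨z, [x, y]⟩`, and `[x, y] ∈ i`. So it suffices that `h ⊥ i`, which
follows the same way: for `w ∈ i` of weight `β ≠ 0` and `z₀ ∈ h` with `β(z₀) ≠ 0`,
`β(z₀) ⟨z, w⟩ = ⟨z, [z₀, w]⟩ = ⟨[z, z₀], w⟩ = 0` since `h` is abelian. Weight `0` does not
occur in `i` because `i ∩ h = 0`.
-/

section

variable {k L : Type*} [Field k] [LieRing L] [LieAlgebra k L] {B : LinearMap.BilinForm k L}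

lemma LinearMap.BilinForm.mul_apply_eq_apply_lie_of_lie_eq_smul
    (hinv : ∀ x y z : L, B ⁅x, y⁆ z = B x ⁅y, z⁆) {z x : L} {c : k} (h : ⁅z, x⁆ = c • x)
    (y : L) : c * B x y = B z ⁅x, y⁆ := by
  rw [← hinv, h, LinearMap.map_smul₂, smul_eq_mul]

lemma LinearMap.BilinForm.mul_apply_eq_lie_apply_of_lie_eq_smul
    (hinv : ∀ x y z : L, B ⁅x, y⁆ z = B x ⁅y, z⁆) {z x : L} {c : k} (h : ⁅z, x⁆ = c • x)
    (y : L) : c * B y x = B ⁅y, z⁆ x := by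
  rw [hinv, h, map_smul, smul_eq_mul]

variable {Q : Type*} [Zero Q] {g : Q → Submodule k L} {χ : Q → L → k} {p : Submodule k L}

lemma exists_weight_ne_zero_of_mem (hp0 : p ⊓ g 0 = ⊥)
    (hpwt : ∀ α : Q, α ≠ 0 → p ⊓ g α ≠ ⊥ → ∃ z ∈ g 0, χ α z ≠ 0)
    {α : Q} {x : L} (hx : x ∈ p ⊓ g α) (hx0 : x ≠ 0) : ∃ z ∈ g 0, χ α z ≠ 0 := by
  refine hpwt α ?_ ?_
  · rintro rfl
    exact hx0 (by simpa [hp0] using hx)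
  · exact (Submodule.ne_bot_iff _).mpr ⟨x, hx, hx0⟩

lemma le_ker_apply_of_mem_zero (hinv : ∀ x y z : L, B ⁅x, y⁆ z = B x ⁅y, z⁆)
    (habel : ∀ z ∈ g 0, ∀ z' ∈ g 0, ⁅z, z'⁆ = (0 : L))
    (hwt : ∀ α : Q, ∀ x ∈ g α, ∀ z ∈ g 0, ⁅z, x⁆ = χ α z • x)
    (hpgr : p = ⨆ α : Q, p ⊓ g α) (hp0 : p ⊓ g 0 = ⊥)
    (hpwt : ∀ α : Q, α ≠ 0 → p ⊓ g α ≠ ⊥ → ∃ z ∈ g 0, χ α z ≠ 0)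
    {z : L} (hz : z ∈ g 0) : p ≤ LinearMap.ker (B z) := by
  rw [hpgr]
  refine iSup_le fun β w hw => ?_
  by_cases hw0 : w = 0
  · simp [hw0]
  obtain ⟨z₀, hz₀, hχ⟩ := exists_weight_ne_zero_of_mem hp0 hpwt hw hw0
  have h := B.mul_apply_eq_lie_apply_of_lie_eq_smul hinv (hwt β w hw.2 z₀ hz₀) z
  rw [habel z hz z₀ hz₀, map_zero, LinearMap.zero_apply] at h
  exact (mul_eq_zero.mp h).resolve_left hχ

lemma inf_le_ker_of_le_ker_apply (hinv : ∀ x y z : L, B ⁅x, y⁆ z = B x ⁅y, z⁆)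
    (hwt : ∀ α : Q, ∀ x ∈ g α, ∀ z ∈ g 0, ⁅z, x⁆ = χ α z • x)
    {i : LieIdeal k L} (hi0 : (i : Submodule k L) ⊓ g 0 = ⊥)
    (hiwt : ∀ α : Q, α ≠ 0 → (i : Submodule k L) ⊓ g α ≠ ⊥ → ∃ z ∈ g 0, χ α z ≠ 0)
    (hker : ∀ z ∈ g 0, (i : Submodule k L) ≤ LinearMap.ker (B z)) (α : Q) :
    (i : Submodule k L) ⊓ g α ≤ LinearMap.ker B := by
  intro x hx
  by_cases hx0 : x = 0
  · simp [hx0]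
  obtain ⟨z, hz, hχ⟩ := exists_weight_ne_zero_of_mem hi0 hiwt hx hx0
  refine LinearMap.mem_ker.mpr (LinearMap.ext fun y => ?_)
  have h := B.mul_apply_eq_apply_lie_of_lie_eq_smul hinv (hwt α x hx.2 z hz) y
  rw [hker z hz (lie_mem_left k L i x y hx.1)] at h
  exact (mul_eq_zero.mp h).resolve_left hχ

end

theorem stmt16_general (k : Type*) [Field k]
    (L : Type*) [LieRing L] [LieAlgebra k L]
    (Q : Type*) [AddCommGroup Q]
    (g : Q → Submodule k L)
    (habel : ∀ z ∈ g 0, ∀ z' ∈ g 0, ⁅z, z'⁆ = (0 : L))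
    (χ : Q → L → k)
    (hwt : ∀ α : Q, ∀ x ∈ g α, ∀ z ∈ g 0, ⁅z, x⁆ = χ α z • x)
    (B : LinearMap.BilinForm k L)
    (hinv : ∀ x y z : L, B ⁅x, y⁆ z = B x ⁅y, z⁆)
    (i : LieIdeal k L)
    (higr : (i : Submodule k L) = ⨆ α : Q, (i : Submodule k L) ⊓ g α)
    (hih : (i : Submodule k L) ⊓ g 0 = ⊥)
    (hiwt : ∀ α : Q, α ≠ 0 → (i : Submodule k L) ⊓ g α ≠ ⊥ →
      ∃ z ∈ g 0, χ α z ≠ 0) :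
    ∀ x ∈ i, ∀ y : L, B x y = 0 := by
  have hker_apply : ∀ z ∈ g 0, (i : Submodule k L) ≤ LinearMap.ker (B z) :=
    fun z hz => le_ker_apply_of_mem_zero hinv habel hwt higr hih hiwt hz
  have hker : (i : Submodule k L) ≤ LinearMap.ker B := by
    rw [higr]
    exact iSup_le (inf_le_ker_of_le_ker_apply hinv hwt hih hiwt hker_apply)
  intro x hx y
  rw [LinearMap.mem_ker.mp (hker hx), LinearMap.zero_apply]

/-- A graded ideal of a Q-graded Lie algebra which intersects the Cartan part g₀ = h
trivially, and all of whose nonzero weights are realized nontrivially by the adjoint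
h-action, is contained in the kernel of any invariant symmetric bilinear form that is
non-degenerate on h. -/
theorem stmt16 (k : Type*) [Field k] [CharZero k]
    (L : Type*) [LieRing L] [LieAlgebra k L]
    (Q : Type*) [AddCommGroup Q] [DecidableEq Q]
    (g : Q → Submodule k L)
    (hint : DirectSum.IsInternal g)
    (hbr : ∀ α β : Q, ∀ x ∈ g α, ∀ y ∈ g β, ⁅x, y⁆ ∈ g (α + β))
    (habel : ∀ z ∈ g 0, ∀ z' ∈ g 0, ⁅z, z'⁆ = (0 : L))
    (χ : Q → L → k)
    (hwt : ∀ α : Q, ∀ x ∈ g α, ∀ z ∈ g 0, ⁅z, x⁆ = χ α z • x)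
    (B : LinearMap.BilinForm k L)
    (hsymm : ∀ x y : L, B x y = B y x)
    (hinv : ∀ x y z : L, B ⁅x, y⁆ z = B x ⁅y, z⁆)
    (hnd : ∀ z ∈ g 0, (∀ z' ∈ g 0, B z z' = 0) → z = 0)
    (i : LieIdeal k L)
    (higr : (i : Submodule k L) = ⨆ α : Q, (i : Submodule k L) ⊓ g α)
    (hih : (i : Submodule k L) ⊓ g 0 = ⊥)
    (hiwt : ∀ α : Q, α ≠ 0 → (i : Submodule k L) ⊓ g α ≠ ⊥ →
      ∃ z ∈ g 0, χ α z ≠ 0) :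
    ∀ x ∈ i, ∀ y : L, B x y = 0 :=
  stmt16_general k L Q g habel χ hwt B hinv i higr hih hiwt
end

section
/- For any three pairwise relative positions of half-open intervals α=(a,b], β=(a',b'] in ℝ with {a,b}∩{a',b'} possibly nonempty, the symmetrized Euler form (α,β)=⟨α,β⟩+⟨β,α⟩ takes values only in {−2,−1,0,1,2}; moreover (α,β)=2 if and only if α=β. -/
/-- The bilinear form <f,g> = Σ_x f₋(x)·(g₋(x) − g₊(x)), where h₋/h₊ denote the
left/right limits of h. -/
noncomputable def pairing (f g : ℝ → ℝ) : ℝ :=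
  ∑ᶠ x : ℝ, Function.leftLim f x * (Function.leftLim g x - Function.rightLim g x)

/-- The characteristic function of the half-open interval (a,b] in ℝ. -/
noncomputable def ind (a b : ℝ) : ℝ → ℝ := Set.indicator (Set.Ioc a b) (fun _ => 1)

/-- The symmetrized Euler form (α,β) = <1_α,1_β> + <1_β,1_α> for α=(a,b], β=(a',b']. -/
noncomputable def epair (a b a' b' : ℝ) : ℝ :=
  pairing (ind a b) (ind a' b') + pairing (ind a' b') (ind a b)

/-!
The jump `1_β₋ − 1_β₊` of the indicator of `β = (a', b']` is `δ_{b'} − δ_{a'}`, and the indicator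
of `α = (a, b]` is left-continuous, so `⟨α, β⟩ = 1_α(b') − 1_α(a')`. Hence `(α, β)` is a sum of two
differences of `0/1` values, and it equals `2` only when `b' ∈ α`, `a' ∉ α`, `b ∈ β` and `a ∉ β`,
which pins down `a = a'` and `b = b'`.
-/

open Function Filter Set Topology

lemma ind_eventuallyEq_nhdsLT (a b x : ℝ) : ind a b =ᶠ[𝓝[<] x] fun _ => ind a b x := by
  rcases le_or_gt x a with hxa | hax
  · filter_upwards [self_mem_nhdsWithin] with y (hy : y < x)
    simp only [ind, indicator_apply, mem_Ioc]
    grind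
  rcases le_or_gt x b with hxb | hbx
  · filter_upwards [Ioo_mem_nhdsLT hax] with y hy
    simp only [ind, indicator_apply, mem_Ioc]
    grind
  · filter_upwards [Ioo_mem_nhdsLT hbx] with y hy
    simp only [ind, indicator_apply, mem_Ioc]
    grind

lemma ind_eventuallyEq_nhdsGT (a b x : ℝ) :
    ind a b =ᶠ[𝓝[>] x] fun _ => (Ico a b).indicator (fun _ => 1) x := by
  rcases lt_or_ge x a with hxa | hax
  · filter_upwards [Ioo_mem_nhdsGT hxa] with y hy
    simp only [ind, indicator_apply, mem_Ioc, mem_Ico]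
    grind
  rcases lt_or_ge x b with hxb | hbx
  · filter_upwards [Ioo_mem_nhdsGT hxb] with y hy
    simp only [ind, indicator_apply, mem_Ioc, mem_Ico]
    grind
  · filter_upwards [self_mem_nhdsWithin] with y (hy : x < y)
    simp only [ind, indicator_apply, mem_Ioc, mem_Ico]
    grind

lemma leftLim_ind (a b x : ℝ) : leftLim (ind a b) x = ind a b x :=
  leftLim_eq_of_tendsto (tendsto_const_nhds.congr' (ind_eventuallyEq_nhdsLT a b x).symm)

lemma rightLim_ind (a b x : ℝ) : rightLim (ind a b) x = (Ico a b).indicator (fun _ => 1) x :=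
  rightLim_eq_of_tendsto (tendsto_const_nhds.congr' (ind_eventuallyEq_nhdsGT a b x).symm)

lemma pairing_ind_right (f : ℝ → ℝ) {a b : ℝ} (hab : a < b) :
    pairing f (ind a b) = leftLim f b - leftLim f a := by
  have hjump : ∀ x, leftLim (ind a b) x - rightLim (ind a b) x =
      (if x = b then 1 else 0) - (if x = a then 1 else 0) := by
    intro x
    rw [leftLim_ind, rightLim_ind]
    simp only [ind, indicator_apply, mem_Ioc, mem_Ico]
    grind
  have hsupp : support (fun x => leftLim f x * (leftLim (ind a b) x - rightLim (ind a b) x)) ⊆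
      ({b, a} : Finset ℝ) := by
    intro x hx
    contrapose! hx
    simp_all
  rw [pairing, finsum_eq_finsetSum_of_support_subset _ hsupp, Finset.sum_pair hab.ne']
  simp [hjump, hab.ne, hab.ne', sub_eq_add_neg]

lemma pairing_ind_ind (a b : ℝ) {a' b' : ℝ} (hab' : a' < b') :
    pairing (ind a b) (ind a' b') = ind a b b' - ind a b a' := by
  rw [pairing_ind_right _ hab', leftLim_ind, leftLim_ind]

lemma ind_eq_zero_or_one (a b x : ℝ) : ind a b x = 0 ∨ ind a b x = 1 :=
  indicator_eq_zero_or_self _ _ _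

lemma ind_eq_one_iff {a b x : ℝ} : ind a b x = 1 ↔ x ∈ Ioc a b := by
  simp [ind, indicator_apply]

lemma epair_ind {a b a' b' : ℝ} (hab : a < b) (hab' : a' < b') :
    epair a b a' b' = ind a b b' - ind a b a' + (ind a' b' b - ind a' b' a) := by
  rw [epair, pairing_ind_ind _ _ hab', pairing_ind_ind _ _ hab]

lemma epair_eq_two_iff {a b a' b' : ℝ} (hab : a < b) (hab' : a' < b') :
    epair a b a' b' = 2 ↔
      b' ∈ Ioc a b ∧ a' ∉ Ioc a b ∧ b ∈ Ioc a' b' ∧ a ∉ Ioc a' b' := by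
  simp only [epair_ind hab hab', ← ind_eq_one_iff]
  rcases ind_eq_zero_or_one a b b' with h₁ | h₁ <;> rcases ind_eq_zero_or_one a b a' with h₂ | h₂ <;>
    rcases ind_eq_zero_or_one a' b' b with h₃ | h₃ <;> rcases ind_eq_zero_or_one a' b' a with h₄ | h₄ <;>
    norm_num [h₁, h₂, h₃, h₄]

lemma epair_mem {a b a' b' : ℝ} (hab : a < b) (hab' : a' < b') :
    epair a b a' b' ∈ ({-2, -1, 0, 1, 2} : Set ℝ) := by
  rw [epair_ind hab hab']
  rcases ind_eq_zero_or_one a b b' with h₁ | h₁ <;> rcases ind_eq_zero_or_one a b a' with h₂ | h₂ <;>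
    rcases ind_eq_zero_or_one a' b' b with h₃ | h₃ <;> rcases ind_eq_zero_or_one a' b' a with h₄ | h₄ <;>
    norm_num [h₁, h₂, h₃, h₄]

lemma Ioc_eq_Ioc_iff_mem_endpoints {α : Type*} [LinearOrder α] {a b a' b' : α} (hab : a < b)
    (hab' : a' < b') :
    Ioc a b = Ioc a' b' ↔ b' ∈ Ioc a b ∧ a' ∉ Ioc a b ∧ b ∈ Ioc a' b' ∧ a ∉ Ioc a' b' := by
  rw [Ioc_eq_Ioc_iff (Or.inl hab)]
  simp only [mem_Ioc]
  constructor
  · rintro ⟨rfl, rfl⟩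
    simp [hab]
  · rintro ⟨⟨-, hb'b⟩, ha', ⟨-, hbb'⟩, ha⟩
    obtain rfl : b = b' := le_antisymm hbb' hb'b
    exact ⟨le_antisymm (not_lt.1 fun h => ha ⟨h, hab.le⟩) (not_lt.1 fun h => ha' ⟨h, hab'.le⟩), rfl⟩

theorem stmt19 : ∀ a b a' b' : ℝ, a < b → a' < b' →
    epair a b a' b' ∈ ({-2, -1, 0, 1, 2} : Set ℝ) ∧
    (epair a b a' b' = 2 ↔ Set.Ioc a b = Set.Ioc a' b') := by
  intro a b a' b' hab hab'
  rw [epair_eq_two_iff hab hab', Ioc_eq_Ioc_iff_mem_endpoints hab hab']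
  exact ⟨epair_mem hab hab', Iff.rfl⟩
end
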